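/- Let K be a field, n a natural number, and p : A → V a chain map of ℤ-indexed chain complexes of K-vector spaces that is degreewise surjective and a quasi-isomorphism. For chain complexes X, Y of K-vector spaces write Hom(X, Y) for the hom-complex with Hom(X, Y)ₖ = ∏ᵢ Hom_K(Xᵢ, Y_{i+k}) and differential ∂h = d_Y ∘ h − (−1)^{|h|} h ∘ d_X. Let P(A, p, V) be the chain complex whose degree-k component is Hom(A^{⊗n}, A)ₖ ⊕ Hom(A^{⊗n}, V)_{k+1} ⊕ Hom(V^{⊗n}, V)ₖ, with differential d(g_A, h, g_V) = (∂g_A, p ∘ g_A − g_V ∘ p^{⊗n} − ∂h, ∂g_V). Let Q be the subcomplex of the product complex Hom(A^{⊗n}, A) × Hom(V^{⊗n}, V) consisting of the pairs (g_A, g_V) with p ∘ g_A = g_V ∘ p^{⊗n}. Then the chain map Q → P(A, p, V) sending (g_A, g_V) to (g_A, 0, g_V) is a quasi-isomorphism. -/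

import Mathlib

open CategoryTheory MonoidalCategory Limits

set_option synthInstance.maxHeartbeats 1000000
set_option maxHeartbeats 1000000

variable (K : Type) [Field K]

/-! ### The monoidal structure on `ℤ`-indexed chain complexes of `K`-vector spaces -/

noncomputable instance : (curriedTensor (ModuleCat K)).Additive where
  map_add := by intros; ext; simp [MonoidalPreadditive.add_whiskerRight]

noncomputable instance (X : ModuleCat K) :
    PreservesColimitsOfSize.{0, 0} ((curriedTensor (ModuleCat K)).obj X) :=
  (ihom.adjunction X).leftAdjoint_preservesColimits

/-- By the braiding, tensoring on the right agrees with tensoring on the left. -/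
noncomputable def tensorRightIsoTensorLeft (X : ModuleCat K) :
    (curriedTensor (ModuleCat K)).flip.obj X ≅ (curriedTensor (ModuleCat K)).obj X :=
  NatIso.ofComponents (fun Y => β_ Y X) (by intros; simp)

noncomputable instance (X : ModuleCat K) :
    PreservesColimitsOfSize.{0, 0} ((curriedTensor (ModuleCat K)).flip.obj X) :=
  preservesColimits_of_natIso (tensorRightIsoTensorLeft K X).symm

instance : (ComplexShape.down ℤ).TensorSigns where
  ε' := MonoidHom.mk' (fun i : Multiplicative ℤ => Int.negOnePow (Multiplicative.toAdd i))
    (fun a b => Int.negOnePow_add (Multiplicative.toAdd a) (Multiplicative.toAdd b))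
  rel_add p q r (hpq : q + 1 = p) := by show q + r + 1 = p + r; omega
  add_rel p q r (hpq : q + 1 = p) := by show r + q + 1 = r + p; omega
  ε'_succ := by
    rintro p q (hpq : q + 1 = p)
    subst hpq
    show Int.negOnePow q = - Int.negOnePow (q + 1)
    rw [Int.negOnePow_succ, neg_neg]

/-- The tensor product of `ℤ`-indexed chain complexes of `K`-vector spaces, with
`(V ⊗ W)ₖ = ⊕_{i+j=k} Vᵢ ⊗ Wⱼ` and the Koszul sign rule for the differential. -/
noncomputable instance : MonoidalCategory (ChainComplex (ModuleCat K) ℤ) :=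
  HomologicalComplex.monoidalCategory (ModuleCat K) (ComplexShape.down ℤ)

/-- The `n`-fold tensor power `A^{⊗n}` of a chain complex. -/
noncomputable def tpow (A : ChainComplex (ModuleCat K) ℤ) :
    ℕ → ChainComplex (ModuleCat K) ℤ
  | 0 => 𝟙_ (ChainComplex (ModuleCat K) ℤ)
  | n + 1 => tpow A n ⊗ A

/-- The `n`-fold tensor power `p^{⊗n}` of a chain map. -/
noncomputable def tpowMap {A V : ChainComplex (ModuleCat K) ℤ} (p : A ⟶ V) :
    ∀ n : ℕ, tpow K A n ⟶ tpow K V n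
  | 0 => 𝟙 _
  | n + 1 => tpowMap p n ⊗ₘ p

/-! ### Hom-complexes -/

lemma d_d_apply {R : Type} [Ring R] (Y : ChainComplex (ModuleCat R) ℤ)
    (a b c : ℤ) (y : Y.X a) : Y.d b c (Y.d a b y) = 0 := by
  calc Y.d b c (Y.d a b y) = (Y.d a b ≫ Y.d b c) y := rfl
    _ = (0 : Y.X a ⟶ Y.X c) y := by rw [Y.d_comp_d a b c]
    _ = 0 := rfl

lemma d_XIsoOfEq_hom_apply {R : Type} [Ring R] (Y : ChainComplex (ModuleCat R) ℤ)
    {a b a' b' : ℤ} (ha : a = a') (hb : b = b') (y : Y.X a) :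
    Y.d a' b' ((Y.XIsoOfEq ha).hom y) = (Y.XIsoOfEq hb).hom (Y.d a b y) := by
  subst ha; subst hb; simp

lemma hom_comm_apply {R : Type} [Ring R] {A B : ChainComplex (ModuleCat R) ℤ}
    (q : A ⟶ B) (i j : ℤ) (x : A.X i) :
    B.d i j (q.f i x) = q.f j (A.d i j x) := by
  calc B.d i j (q.f i x) = (q.f i ≫ B.d i j) x := rfl
    _ = (A.d i j ≫ q.f j) x := by rw [q.comm i j]
    _ = q.f j (A.d i j x) := rfl

lemma XIsoOfEq_hom_naturality {R : Type} [Ring R] {A V : ChainComplex (ModuleCat R) ℤ}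
    (p : A ⟶ V) {a b : ℤ} (e : a = b) (y : A.X a) :
    (V.XIsoOfEq e).hom (p.f a y) = p.f b ((A.XIsoOfEq e).hom y) := by
  subst e; simp

/-- The differential of the hom-complex `Hom(X, Y)`, from degree `k` to degree
`l = k - 1`; it sends `h` to `d_Y ∘ h - (-1)^k h ∘ d_X`. -/
noncomputable def homComplexD (X Y : ChainComplex (ModuleCat K) ℤ) (k l : ℤ)
    (h : l + 1 = k) :
    (ModuleCat.of K (∀ i : ℤ, X.X i →ₗ[K] Y.X (i + k))) ⟶
    (ModuleCat.of K (∀ i : ℤ, X.X i →ₗ[K] Y.X (i + l))) :=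
  ModuleCat.ofHom <| LinearMap.pi fun i =>
    ((LinearMap.llcomp K (X.X i) (Y.X (i + k)) (Y.X (i + l))
        (Y.d (i + k) (i + l)).hom).comp (LinearMap.proj i))
    - ((-1 : K) ^ k) •
      ((LinearMap.lcomp K (Y.X (i + l)) (X.d i (i - 1)).hom).comp
        (((LinearMap.llcomp K (X.X (i - 1)) (Y.X (i - 1 + k)) (Y.X (i + l)))
            ((Y.XIsoOfEq (show i - 1 + k = i + l by omega)).hom.hom)).comp
          (LinearMap.proj (i - 1))))

lemma homComplexD_apply (X Y : ChainComplex (ModuleCat K) ℤ) (k l : ℤ)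
    (h : l + 1 = k) (f : ∀ i : ℤ, X.X i →ₗ[K] Y.X (i + k)) (i : ℤ) (x : X.X i) :
    homComplexD K X Y k l h f i x
      = Y.d (i + k) (i + l) (f i x)
        - ((-1 : K) ^ k) •
            (Y.XIsoOfEq (show i - 1 + k = i + l by omega)).hom
              (f (i - 1) (X.d i (i - 1) x)) := rfl

/-- The hom-complex `Hom(X, Y)`, with `Hom(X, Y)ₖ = ∏ᵢ Hom(Xᵢ, Y_{i+k})` and
differential `∂h = d_Y ∘ h - (-1)^{|h|} h ∘ d_X`. -/
noncomputable def homComplex (X Y : ChainComplex (ModuleCat K) ℤ) :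
    ChainComplex (ModuleCat K) ℤ where
  X k := ModuleCat.of K (∀ i : ℤ, X.X i →ₗ[K] Y.X (i + k))
  d k l := if h : l + 1 = k then homComplexD K X Y k l h else 0
  shape k l h := dif_neg h
  d_comp_d' k l m hkl hlm := by
    obtain rfl : l + 1 = k := hkl
    obtain rfl : m + 1 = l := hlm
    rw [dif_pos rfl, dif_pos rfl]
    apply ModuleCat.hom_ext
    apply LinearMap.ext
    intro f
    funext i
    apply LinearMap.ext
    intro x
    have e1 : (homComplexD K X Y (m + 1 + 1) (m + 1) rfl ≫
        homComplexD K X Y (m + 1) m rfl) f i x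
        = homComplexD K X Y (m + 1) m rfl
            (homComplexD K X Y (m + 1 + 1) (m + 1) rfl f) i x := rfl
    rw [e1, homComplexD_apply, homComplexD_apply, homComplexD_apply]
    rw [d_d_apply]
    rw [map_sub, map_smul, map_sub, map_smul]
    rw [d_XIsoOfEq_hom_apply Y (show i - 1 + (m + 1 + 1) = i + (m + 1) by omega)
      (show i - 1 + (m + 1) = i + m by omega)]
    rw [d_d_apply Y]
    have hsign : ((-1 : K) ^ (m + 1 + 1)) = -((-1 : K) ^ (m + 1)) := by
      rw [zpow_add_one₀ (by norm_num : (-1 : K) ≠ 0)]; ring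
    rw [hsign]
    simp
    rfl

/-- Precomposition with a chain map `q : A ⟶ B`, as a chain map
`Hom(B, W) ⟶ Hom(A, W)` of hom-complexes. -/
noncomputable def homComplexPrecomp {A B : ChainComplex (ModuleCat K) ℤ} (q : A ⟶ B)
    (W : ChainComplex (ModuleCat K) ℤ) :
    homComplex K B W ⟶ homComplex K A W where
  f k := ModuleCat.ofHom <| LinearMap.pi fun i =>
    (LinearMap.lcomp K (W.X (i + k)) (q.f i).hom).comp (LinearMap.proj i)
  comm' k l hkl := by
    obtain rfl : l + 1 = k := hkl
    dsimp only [homComplex]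
    rw [dif_pos rfl, dif_pos rfl]
    apply ModuleCat.hom_ext
    apply LinearMap.ext
    intro h
    funext i
    apply LinearMap.ext
    intro x
    show W.d (i + (l + 1)) (i + l) (h i (q.f i x))
        - ((-1 : K) ^ (l + 1)) •
            (W.XIsoOfEq (show i - 1 + (l + 1) = i + l by omega)).hom
              (h (i - 1) (q.f (i - 1) (A.d i (i - 1) x)))
      = W.d (i + (l + 1)) (i + l) (h i (q.f i x))
        - ((-1 : K) ^ (l + 1)) •
            (W.XIsoOfEq (show i - 1 + (l + 1) = i + l by omega)).hom
              (h (i - 1) (B.d i (i - 1) (q.f i x)))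
    rw [hom_comm_apply q]

/-- Postcomposition with a chain map `p : A ⟶ V`, as a chain map
`Hom(X, A) ⟶ Hom(X, V)` of hom-complexes. -/
noncomputable def homComplexPostcomp (X : ChainComplex (ModuleCat K) ℤ)
    {A V : ChainComplex (ModuleCat K) ℤ} (p : A ⟶ V) :
    homComplex K X A ⟶ homComplex K X V where
  f k := ModuleCat.ofHom <| LinearMap.pi fun i =>
    (LinearMap.llcomp K (X.X i) (A.X (i + k)) (V.X (i + k)) (p.f (i + k)).hom).comp
      (LinearMap.proj i)
  comm' k l hkl := by
    obtain rfl : l + 1 = k := hkl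
    dsimp only [homComplex]
    rw [dif_pos rfl, dif_pos rfl]
    apply ModuleCat.hom_ext
    apply LinearMap.ext
    intro h
    funext i
    apply LinearMap.ext
    intro x
    show V.d (i + (l + 1)) (i + l) (p.f (i + (l + 1)) (h i x))
        - ((-1 : K) ^ (l + 1)) •
            (V.XIsoOfEq (show i - 1 + (l + 1) = i + l by omega)).hom
              (p.f (i - 1 + (l + 1)) (h (i - 1) (X.d i (i - 1) x)))
      = p.f (i + l) (A.d (i + (l + 1)) (i + l) (h i x)
          - ((-1 : K) ^ (l + 1)) •
              (A.XIsoOfEq (show i - 1 + (l + 1) = i + l by omega)).hom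
                (h (i - 1) (X.d i (i - 1) x)))
    rw [map_sub, map_smul, hom_comm_apply p, XIsoOfEq_hom_naturality p]

variable (H1 H2 H3 : ChainComplex (ModuleCat.{0} K) ℤ) (u : H1 ⟶ H2) (w : H3 ⟶ H2)

/-- The differential of the path complex `P(u, w)` of a cospan `u : H1 ⟶ H2 ⟵ H3 : w`,
sending `(g₁, h, g₃)` in degree `k` to `(d g₁, u g₁ - w g₃ - d h, d g₃)`. -/
noncomputable def pathComplexD (k l : ℤ) (hkl : l + 1 = k) :
    ModuleCat.of K ((H1.X k) × (H2.X (k + 1)) × (H3.X k)) ⟶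
    ModuleCat.of K ((H1.X l) × (H2.X (l + 1)) × (H3.X l)) :=
  ModuleCat.ofHom <| LinearMap.prod
    (((H1.d k l).hom : H1.X k →ₗ[K] H1.X l).comp
      (LinearMap.fst K (H1.X k) ((H2.X (k + 1)) × (H3.X k))))
    (LinearMap.prod
      (((H2.XIsoOfEq (show k = l + 1 by omega)).hom.hom.comp
          ((((u.f k).hom : H1.X k →ₗ[K] H2.X k).comp
              (LinearMap.fst K (H1.X k) ((H2.X (k + 1)) × (H3.X k))))
            - (((w.f k).hom : H3.X k →ₗ[K] H2.X k).comp
                ((LinearMap.snd K (H2.X (k + 1)) (H3.X k)).comp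
                  (LinearMap.snd K (H1.X k) ((H2.X (k + 1)) × (H3.X k)))))))
        - (((H2.d (k + 1) (l + 1)).hom : H2.X (k + 1) →ₗ[K] H2.X (l + 1)).comp
            ((LinearMap.fst K (H2.X (k + 1)) (H3.X k)).comp
              (LinearMap.snd K (H1.X k) ((H2.X (k + 1)) × (H3.X k))))))
      (((H3.d k l).hom : H3.X k →ₗ[K] H3.X l).comp
        ((LinearMap.snd K (H2.X (k + 1)) (H3.X k)).comp
          (LinearMap.snd K (H1.X k) ((H2.X (k + 1)) × (H3.X k))))))

lemma pathComplexD_apply (k l : ℤ) (hkl : l + 1 = k)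
    (z : (H1.X k) × (H2.X (k + 1)) × (H3.X k)) :
    pathComplexD K H1 H2 H3 u w k l hkl z
      = (H1.d k l z.1,
          (H2.XIsoOfEq (show k = l + 1 by omega)).hom (u.f k z.1 - w.f k z.2.2)
            - H2.d (k + 1) (l + 1) z.2.1,
          H3.d k l z.2.2) := rfl

/-- The path complex `P(u, w)` of a cospan `u : H1 ⟶ H2 ⟵ H3 : w`, with degree-`k`
component `H1ₖ × H2ₖ₊₁ × H3ₖ` and differential
`d (g₁, h, g₃) = (d g₁, u g₁ - w g₃ - d h, d g₃)`. -/
noncomputable def pathComplex : ChainComplex (ModuleCat K) ℤ where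
  X k := ModuleCat.of K ((H1.X k) × (H2.X (k + 1)) × (H3.X k))
  d k l := if hkl : l + 1 = k then pathComplexD K H1 H2 H3 u w k l hkl else 0
  shape k l hkl := dif_neg hkl
  d_comp_d' k l m hkl hlm := by
    obtain rfl : l + 1 = k := hkl
    obtain rfl : m + 1 = l := hlm
    rw [dif_pos rfl, dif_pos rfl]
    apply ModuleCat.hom_ext
    apply LinearMap.ext
    intro z
    have e1 : (pathComplexD K H1 H2 H3 u w (m + 1 + 1) (m + 1) rfl ≫
        pathComplexD K H1 H2 H3 u w (m + 1) m rfl) z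
        = pathComplexD K H1 H2 H3 u w (m + 1) m rfl
            (pathComplexD K H1 H2 H3 u w (m + 1 + 1) (m + 1) rfl z) := rfl
    rw [e1, pathComplexD_apply, pathComplexD_apply]
    dsimp only
    rw [d_d_apply, d_d_apply]
    refine Prod.ext rfl (Prod.ext ?_ rfl)
    dsimp only
    rw [map_sub, map_sub, map_sub]
    simp only [HomologicalComplex.XIsoOfEq_rfl, Iso.refl_hom, ModuleCat.id_apply]
    rw [d_d_apply H2, sub_zero, map_sub]
    rw [hom_comm_apply u, hom_comm_apply w]
    simp

/-- The degree-`k` component of the subcomplex `Q` of `H1 × H3`: pairs `(g₁, g₃)`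
with `u g₁ = w g₃`. -/
noncomputable def pairSub (k : ℤ) : Submodule K ((H1.X k) × (H3.X k)) :=
  LinearMap.eqLocus
    (((u.f k).hom : H1.X k →ₗ[K] H2.X k).comp (LinearMap.fst K (H1.X k) (H3.X k)))
    (((w.f k).hom : H3.X k →ₗ[K] H2.X k).comp (LinearMap.snd K (H1.X k) (H3.X k)))

lemma pairSub_stable (k l : ℤ) :
    ∀ z ∈ pairSub K H1 H2 H3 u w k,
      (((H1.d k l).hom : H1.X k →ₗ[K] H1.X l).prodMap ((H3.d k l).hom : H3.X k →ₗ[K] H3.X l)) z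
        ∈ pairSub K H1 H2 H3 u w l := by
  intro z hz
  rw [pairSub, LinearMap.mem_eqLocus] at hz ⊢
  simp only [LinearMap.comp_apply, LinearMap.fst_apply, LinearMap.snd_apply,
    LinearMap.prodMap_apply] at hz ⊢
  rw [← hom_comm_apply u, ← hom_comm_apply w, hz]

/-- The subcomplex `Q` of the product complex `H1 × H3` consisting of the pairs
`(g₁, g₃)` with `u g₁ = w g₃`, with the restricted differential. -/
noncomputable def pairComplex : ChainComplex (ModuleCat.{0} K) ℤ where
  X k := ModuleCat.of K (pairSub K H1 H2 H3 u w k)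
  d k l := ModuleCat.ofHom <| LinearMap.restrict
    (((H1.d k l).hom : H1.X k →ₗ[K] H1.X l).prodMap ((H3.d k l).hom : H3.X k →ₗ[K] H3.X l))
    (pairSub_stable K H1 H2 H3 u w k l)
  shape k l h := by
    apply ModuleCat.hom_ext
    apply LinearMap.ext
    rintro ⟨z, hz⟩
    apply Subtype.ext
    show (((H1.d k l).hom : H1.X k →ₗ[K] H1.X l).prodMap
        ((H3.d k l).hom : H3.X k →ₗ[K] H3.X l)) z = (0 : (H1.X l) × (H3.X l))
    rw [LinearMap.prodMap_apply]
    simp [H1.shape k l h, H3.shape k l h, Prod.ext_iff]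
  d_comp_d' k l m _ _ := by
    apply ModuleCat.hom_ext
    apply LinearMap.ext
    rintro ⟨z, hz⟩
    apply Subtype.ext
    show (((H1.d l m).hom : H1.X l →ₗ[K] H1.X m).prodMap ((H3.d l m).hom : H3.X l →ₗ[K] H3.X m))
        ((((H1.d k l).hom : H1.X k →ₗ[K] H1.X l).prodMap ((H3.d k l).hom : H3.X k →ₗ[K] H3.X l)) z)
      = (0 : (H1.X m) × (H3.X m))
    rw [LinearMap.prodMap_apply, LinearMap.prodMap_apply]
    simp only [Prod.ext_iff]
    exact ⟨d_d_apply H1 k l m z.1, d_d_apply H3 k l m z.2⟩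

/-- The inclusion `(g₁, g₃) ↦ (g₁, 0, g₃)` of `Q` into the path complex. -/
noncomputable def pairToPath :
    pairComplex K H1 H2 H3 u w ⟶ pathComplex K H1 H2 H3 u w where
  f k := ModuleCat.ofHom <| LinearMap.prod
      ((LinearMap.fst K (H1.X k) (H3.X k)).comp (pairSub K H1 H2 H3 u w k).subtype)
      (LinearMap.prod 0
        ((LinearMap.snd K (H1.X k) (H3.X k)).comp (pairSub K H1 H2 H3 u w k).subtype))
  comm' k l hkl := by
    obtain rfl : l + 1 = k := hkl
    dsimp only [pairComplex, pathComplex]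
    rw [dif_pos rfl]
    apply ModuleCat.hom_ext
    apply LinearMap.ext
    rintro ⟨z, hz⟩
    have hz' : u.f (l + 1) z.1 = w.f (l + 1) z.2 := hz
    refine Prod.ext rfl (Prod.ext ?_ rfl)
    show (H2.XIsoOfEq (show l + 1 = l + 1 by omega)).hom
        (u.f (l + 1) z.1 - w.f (l + 1) z.2)
        - H2.d (l + 1 + 1) (l + 1) 0 = 0
    rw [sub_eq_zero_of_eq hz', map_zero, map_zero, sub_zero]

/-!
The map `(g₁, h, g₃) ↦ (h, u g₁ - w g₃)` from the path complex to the cone `D` of `𝟙 H2`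
has kernel exactly the image of `Q`, and it is onto as soon as `u` is degreewise surjective.
Since `D` is acyclic, the long exact homology sequence of `0 ⟶ Q ⟶ P ⟶ D ⟶ 0` makes
`Q ⟶ P` a quasi-isomorphism. For `P(A, p, V)` the map `u` is postcomposition with `p`, which
is degreewise surjective because `p` has a degreewise `K`-linear section.
-/

namespace CategoryTheory.ShortComplex.ShortExact

lemma quasiIso_f_of_acyclic {C ι : Type*} [Category* C] [Abelian C] {c : ComplexShape ι}
    {S : ShortComplex (HomologicalComplex C c)} (hS : S.ShortExact) (h₃ : S.X₃.Acyclic) :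
    _root_.QuasiIso S.f := by
  rw [_root_.quasiIso_iff]
  intro i
  rw [_root_.quasiIsoAt_iff_isIso_homologyMap]
  have : Mono (HomologicalComplex.homologyMap S.f i) := by
    by_cases! hi : ∃ j, c.Rel j i
    · obtain ⟨j, hji⟩ := hi
      exact (hS.homology_exact₁ j i hji).mono_g (((h₃ j).isZero_homology).eq_of_src _ _)
    · have := hS.mono_f
      exact HomologicalComplex.mono_homologyMap_of_mono_of_not_rel S.f i hi
  have : Epi (HomologicalComplex.homologyMap S.f i) :=
    (hS.homology_exact₂ i).epi_f (((h₃ i).isZero_homology).eq_of_tgt _ _)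
  exact isIso_of_mono_of_epi _

end CategoryTheory.ShortComplex.ShortExact

noncomputable def diskComplexD (k l : ℤ) (hkl : l + 1 = k) :
    ModuleCat.of K ((H2.X (k + 1)) × (H2.X k)) ⟶
    ModuleCat.of K ((H2.X (l + 1)) × (H2.X l)) :=
  ModuleCat.ofHom <| LinearMap.prod
    (((H2.XIsoOfEq (show k = l + 1 by omega)).hom.hom.comp
        (LinearMap.snd K (H2.X (k + 1)) (H2.X k)))
      - (((H2.d (k + 1) (l + 1)).hom : H2.X (k + 1) →ₗ[K] H2.X (l + 1)).comp
          (LinearMap.fst K (H2.X (k + 1)) (H2.X k))))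
    (((H2.d k l).hom : H2.X k →ₗ[K] H2.X l).comp (LinearMap.snd K (H2.X (k + 1)) (H2.X k)))

lemma diskComplexD_apply (k l : ℤ) (hkl : l + 1 = k) (z : (H2.X (k + 1)) × (H2.X k)) :
    diskComplexD K H2 k l hkl z
      = ((H2.XIsoOfEq (show k = l + 1 by omega)).hom z.2 - H2.d (k + 1) (l + 1) z.1,
          H2.d k l z.2) := rfl

/-- The cone of `𝟙 H2`, with `Dₖ = H2ₖ₊₁ × H2ₖ` and `d (h, m) = (m - d h, d m)`. -/
noncomputable def diskComplex : ChainComplex (ModuleCat.{0} K) ℤ where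
  X k := ModuleCat.of K ((H2.X (k + 1)) × (H2.X k))
  d k l := if hkl : l + 1 = k then diskComplexD K H2 k l hkl else 0
  shape k l hkl := dif_neg hkl
  d_comp_d' k l m hkl hlm := by
    obtain rfl : l + 1 = k := hkl
    obtain rfl : m + 1 = l := hlm
    rw [dif_pos rfl, dif_pos rfl]
    apply ModuleCat.hom_ext
    apply LinearMap.ext
    intro z
    change diskComplexD K H2 (m + 1) m rfl (diskComplexD K H2 (m + 1 + 1) (m + 1) rfl z) = 0
    rw [diskComplexD_apply, diskComplexD_apply]
    simp [d_d_apply]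

lemma diskComplex_d_apply (k : ℤ) (z : (H2.X (k + 1 + 1)) × (H2.X (k + 1))) :
    (diskComplex K H2).d (k + 1) k z
      = (z.2 - H2.d (k + 1 + 1) (k + 1) z.1, H2.d (k + 1) k z.2) := by
  change (if hkl : k + 1 = k + 1 then diskComplexD K H2 (k + 1) k hkl else 0) z = _
  rw [dif_pos rfl, diskComplexD_apply]
  simp

lemma diskComplex_acyclic : (diskComplex K H2).Acyclic := by
  intro i
  obtain ⟨j, rfl⟩ : ∃ j, i = j + 1 := ⟨i - 1, by omega⟩
  rw [HomologicalComplex.exactAt_iff' _ (j + 1 + 1) (j + 1) j (by simp) (by simp),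
    ShortComplex.moduleCat_exact_iff]
  rintro ⟨h, m⟩ hz
  replace hz :
    (diskComplex K H2).d (j + 1) j ((h, m) : H2.X (j + 1 + 1) × H2.X (j + 1)) = 0 := hz
  rw [diskComplex_d_apply] at hz
  have hm : m = H2.d (j + 1 + 1) (j + 1) h := sub_eq_zero.mp (congrArg Prod.fst hz)
  refine ⟨(0, h), ?_⟩
  change (diskComplex K H2).d (j + 1 + 1) (j + 1)
    ((0, h) : H2.X (j + 1 + 1 + 1) × H2.X (j + 1 + 1)) = (h, m)
  rw [diskComplex_d_apply, map_zero, sub_zero, hm]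

noncomputable def pathToDisk : pathComplex K H1 H2 H3 u w ⟶ diskComplex K H2 where
  f k := ModuleCat.ofHom <| LinearMap.prod
    ((LinearMap.fst K (H2.X (k + 1)) (H3.X k)).comp
      (LinearMap.snd K (H1.X k) ((H2.X (k + 1)) × (H3.X k))))
    ((((u.f k).hom : H1.X k →ₗ[K] H2.X k).comp
        (LinearMap.fst K (H1.X k) ((H2.X (k + 1)) × (H3.X k))))
      - (((w.f k).hom : H3.X k →ₗ[K] H2.X k).comp
          ((LinearMap.snd K (H2.X (k + 1)) (H3.X k)).comp
            (LinearMap.snd K (H1.X k) ((H2.X (k + 1)) × (H3.X k))))))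
  comm' k l hkl := by
    obtain rfl : l + 1 = k := hkl
    dsimp only [pathComplex, diskComplex]
    rw [dif_pos rfl, dif_pos rfl]
    apply ModuleCat.hom_ext
    apply LinearMap.ext
    intro z
    refine Prod.ext rfl ?_
    change H2.d (l + 1) l (u.f (l + 1) z.1 - w.f (l + 1) z.2.2)
      = u.f l (H1.d (l + 1) l z.1) - w.f l (H3.d (l + 1) l z.2.2)
    rw [map_sub, hom_comm_apply u, hom_comm_apply w]

noncomputable def pairPathDisk : ShortComplex (ChainComplex (ModuleCat.{0} K) ℤ) :=
  ShortComplex.mk (pairToPath K H1 H2 H3 u w) (pathToDisk K H1 H2 H3 u w) (by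
    apply HomologicalComplex.hom_ext
    intro k
    apply ModuleCat.hom_ext
    apply LinearMap.ext
    rintro ⟨z, hz⟩
    exact Prod.ext rfl (sub_eq_zero.mpr hz))

lemma pairToPath_f_injective (k : ℤ) :
    Function.Injective ((pairToPath K H1 H2 H3 u w).f k) := by
  rintro ⟨⟨a₁, a₃⟩, _⟩ ⟨⟨b₁, b₃⟩, _⟩ h
  replace h : (a₁, (0 : H2.X (k + 1)), a₃) = (b₁, 0, b₃) := h
  simp only [Prod.mk.injEq, true_and] at h
  obtain ⟨rfl, rfl⟩ := h
  rfl

lemma pathToDisk_f_surjective (hu : ∀ k, Function.Surjective (u.f k)) (k : ℤ) :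
    Function.Surjective ((pathToDisk K H1 H2 H3 u w).f k) := by
  rintro ⟨h, m⟩
  obtain ⟨g, rfl⟩ := hu k m
  refine ⟨(g, h, 0), ?_⟩
  change ((h, u.f k g - w.f k 0) : H2.X (k + 1) × H2.X k) = (h, u.f k g)
  rw [map_zero, sub_zero]

lemma exact_pairToPath_f_pathToDisk_f (k : ℤ) :
    Function.Exact ((pairToPath K H1 H2 H3 u w).f k) ((pathToDisk K H1 H2 H3 u w).f k) := by
  rintro ⟨g₁, h, g₃⟩
  change ((h, u.f k g₁ - w.f k g₃) : H2.X (k + 1) × H2.X k) = 0 ↔ _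
  rw [Prod.mk_eq_zero, sub_eq_zero]
  constructor
  · rintro ⟨rfl, hg⟩
    exact ⟨⟨(g₁, g₃), hg⟩, rfl⟩
  · rintro ⟨⟨⟨a₁, a₃⟩, ha⟩, he⟩
    replace he : (a₁, (0 : H2.X (k + 1)), a₃) = (g₁, h, g₃) := he
    simp only [Prod.mk.injEq] at he
    obtain ⟨rfl, rfl, rfl⟩ := he
    exact ⟨rfl, ha⟩

lemma pairPathDisk_shortExact (hu : ∀ k, Function.Surjective (u.f k)) :
    (pairPathDisk K H1 H2 H3 u w).ShortExact := by
  rw [HomologicalComplex.shortExact_iff_degreewise_shortExact]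
  exact fun k => ModuleCat.shortComplex_shortExact _
    (exact_pairToPath_f_pathToDisk_f K H1 H2 H3 u w k)
    (pairToPath_f_injective K H1 H2 H3 u w k) (pathToDisk_f_surjective K H1 H2 H3 u w hu k)

lemma quasiIso_pairToPath_of_surjective (hu : ∀ k, Function.Surjective (u.f k)) :
    QuasiIso (pairToPath K H1 H2 H3 u w) :=
  (pairPathDisk_shortExact K H1 H2 H3 u w hu).quasiIso_f_of_acyclic (diskComplex_acyclic K H2)

lemma homComplexPostcomp_f_surjective (X : ChainComplex (ModuleCat K) ℤ)
    {A V : ChainComplex (ModuleCat K) ℤ} {p : A ⟶ V} (hp : ∀ i, Function.Surjective (p.f i))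
    (k : ℤ) : Function.Surjective ((homComplexPostcomp K X p).f k) := by
  choose s hs using fun j => (p.f j).hom.exists_rightInverse_of_surjective
    (LinearMap.range_eq_top.2 (hp j))
  intro h
  refine ⟨fun i => (s (i + k)).comp (h i), funext fun i => LinearMap.ext fun x => ?_⟩
  exact DFunLike.congr_fun (hs (i + k)) (h i x)

theorem quasiIso_pairToPath
    (n : ℕ) {A V : ChainComplex (ModuleCat K) ℤ} (p : A ⟶ V)
    (hsurj : ∀ i : ℤ, Function.Surjective (p.f i)) :
    QuasiIso (pairToPath K
      (homComplex K (tpow K A n) A)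
      (homComplex K (tpow K A n) V)
      (homComplex K (tpow K V n) V)
      (homComplexPostcomp K (tpow K A n) p)
      (homComplexPrecomp K (tpowMap K p n) V)) :=
  quasiIso_pairToPath_of_surjective K _ _ _ _ _
    (homComplexPostcomp_f_surjective K (tpow K A n) hsurj)
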